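/- arXiv:1110.5365 — 2 statements merged into one kernel-verified Lean document; each statement's English description precedes it below -/
import Mathlib

section
/- In the fast function forcing poset F_κ (conditions: partial functions p ⊆ κ × κ whose domain consists of inaccessible cardinals γ with p''γ ⊆ γ, and such that |p↾γ| < γ for every inaccessible γ ≤ κ, ordered by reverse inclusion), for any fixed condition p = {(γ, δ)} with γ inaccessible, the cone F_κ↾p is isomorphic to F_γ × F_{[λ,κ)}, where λ is the least inaccessible above max(γ, δ) and F_{[λ,κ)} = { p ∈ F_κ : dom(p) ⊆ [λ, κ) }. -/
/-!
Fast function forcing `F_κ`: conditions are partial functions `p ⊆ κ × κ`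
(rendered as functional sets of pairs of ordinals) such that (1) every
`γ ∈ dom(p)` is inaccessible and `p''γ ⊆ γ`, and (2) `|p↾γ| < γ` for every
inaccessible `γ ≤ κ`; the order is reverse inclusion.  For a fixed condition
`p = {(γ, δ)}` with `γ` inaccessible, the cone `F_κ↾p` is isomorphic to
`F_γ × F_{[λ,κ)}`, where `λ` is the least inaccessible above `max(γ, δ)` and
`F_{[λ,κ)} = { q ∈ F_κ : dom(q) ⊆ [λ, κ) }`; the isomorphism sends `q ≤ p` to
`(q↾γ, q↾[λ,κ))`.
-/

/-- `γ` is an inaccessible ordinal, i.e. the ordinal of an inaccessible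
cardinal. -/
def IsInaccOrd (γ : Ordinal) : Prop :=
  γ.card.IsInaccessible ∧ γ.card.ord = γ

/-- A condition of fast function forcing `F_κ`. -/
structure FastFn (κ : Ordinal) where
  carrier : Set (Ordinal × Ordinal)
  isFunc : ∀ ⦃a b c : Ordinal⦄, (a, b) ∈ carrier → (a, c) ∈ carrier → b = c
  mem_lt : ∀ ⦃x⦄, x ∈ carrier → x.1 < κ ∧ x.2 < κ
  dom_inacc : ∀ ⦃a b : Ordinal⦄, (a, b) ∈ carrier → IsInaccOrd a
  image_lt : ∀ ⦃a b c d : Ordinal⦄, (a, b) ∈ carrier → (c, d) ∈ carrier →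
    c < a → d < a
  small : ∀ γ : Ordinal, γ ≤ κ → IsInaccOrd γ →
    Cardinal.mk {x : Ordinal × Ordinal // x ∈ carrier ∧ x.1 < γ} <
      Cardinal.lift.{1, 0} γ.card

/-- Fast function conditions are ordered by reverse inclusion. -/
instance {κ : Ordinal} : LE (FastFn κ) :=
  ⟨fun p q => q.carrier ⊆ p.carrier⟩

/-!
A condition `q` below `p = {(γ, δ)}` splits into three parts: its restriction below `γ`, the
pair `(γ, δ)` itself, and its restriction to `[λ, κ)`. Nothing lies in between: if `(α, β) ∈ q`
with `α > γ`, then `δ < α` because `q''α ⊆ α`, so `α` is an inaccessible above `max γ δ` and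
hence `α ≥ λ`. Conversely, a condition of `F_γ`, the pair `(γ, δ)` and a condition living on
`[λ, κ)` can be glued, since each piece lies entirely below the domain of the next one, and
smallness survives finite unions because inaccessibles are infinite.
-/

open Cardinal

namespace FastFn

variable {κ κ' γ δ lam : Ordinal}

theorem ext {p q : FastFn κ} (h : p.carrier = q.carrier) : p = q := by
  cases p; cases q; cases h; rfl

def ofSubset (q : FastFn κ) (s : Set (Ordinal × Ordinal)) (hs : s ⊆ q.carrier) (hκ' : κ' ≤ κ)
    (hlt : ∀ x ∈ s, x.1 < κ' ∧ x.2 < κ') : FastFn κ' where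
  carrier := s
  isFunc _ _ _ hb hc := q.isFunc (hs hb) (hs hc)
  mem_lt := hlt
  dom_inacc _ _ h := q.dom_inacc (hs h)
  image_lt _ _ _ _ ha hc := q.image_lt (hs ha) (hs hc)
  small μ hμ hμi := by
    refine lt_of_le_of_lt ?_ (q.small μ (hμ.trans hκ') hμi)
    exact mk_le_mk_of_subset fun _ hx => ⟨hs hx.1, hx.2⟩

def restrictBelow (q : FastFn κ) (hq : (γ, δ) ∈ q.carrier) : FastFn γ :=
  q.ofSubset {x | x ∈ q.carrier ∧ x.1 < γ} (fun _ hx => hx.1) (q.mem_lt hq).1.le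
    fun _ hx => ⟨hx.2, q.image_lt hq hx.1 hx.2⟩

def restrictFrom (q : FastFn κ) (lam : Ordinal) : FastFn κ :=
  q.ofSubset {x | x ∈ q.carrier ∧ lam ≤ x.1} (fun _ hx => hx.1) le_rfl fun _ hx => q.mem_lt hx.1

def liftLE (r : FastFn γ) (hγ : IsInaccOrd γ) (hγκ : γ ≤ κ) : FastFn κ where
  carrier := r.carrier
  isFunc := r.isFunc
  mem_lt _ hx := ⟨(r.mem_lt hx).1.trans_le hγκ, (r.mem_lt hx).2.trans_le hγκ⟩
  dom_inacc := r.dom_inacc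
  image_lt := r.image_lt
  small μ _ hμ := by
    rcases le_or_gt μ γ with hμγ | hγμ
    · exact r.small μ hμγ hμ
    · calc #{x : Ordinal × Ordinal // x ∈ r.carrier ∧ x.1 < μ}
          ≤ #{x : Ordinal × Ordinal // x ∈ r.carrier ∧ x.1 < γ} :=
            mk_le_mk_of_subset fun x hx => ⟨hx.1, (r.mem_lt hx.1).1⟩
        _ < lift.{1} γ.card := r.small γ le_rfl hγ
        _ < lift.{1} μ.card := lift_lt.mpr (lt_ord.mp (hμ.2.symm ▸ hγμ))

def append (p q : FastFn κ)
    (hpq : ∀ x ∈ p.carrier, ∀ y ∈ q.carrier, x.1 < y.1 ∧ x.2 < y.1) : FastFn κ where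
  carrier := p.carrier ∪ q.carrier
  isFunc := by
    rintro a b c (hb | hb) (hc | hc)
    · exact p.isFunc hb hc
    · exact absurd (hpq _ hb _ hc).1 (lt_irrefl a)
    · exact absurd (hpq _ hc _ hb).1 (lt_irrefl a)
    · exact q.isFunc hb hc
  mem_lt := by
    rintro x (hx | hx)
    exacts [p.mem_lt hx, q.mem_lt hx]
  dom_inacc := by
    rintro a b (h | h)
    exacts [p.dom_inacc h, q.dom_inacc h]
  image_lt := by
    rintro a b c d (ha | ha) (hc | hc) hca
    · exact p.image_lt ha hc hca
    · exact absurd hca (hpq _ ha _ hc).1.asymm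
    · exact (hpq _ hc _ ha).2
    · exact q.image_lt ha hc hca
  small μ hμκ hμ :=
    calc #{x : Ordinal × Ordinal // x ∈ p.carrier ∪ q.carrier ∧ x.1 < μ}
        ≤ #↥({x | x ∈ p.carrier ∧ x.1 < μ} ∪ {x | x ∈ q.carrier ∧ x.1 < μ}) :=
          mk_le_mk_of_subset fun _ ⟨hx, hlt⟩ => hx.imp (⟨·, hlt⟩) (⟨·, hlt⟩)
      _ ≤ #{x : Ordinal × Ordinal // x ∈ p.carrier ∧ x.1 < μ} +
            #{x : Ordinal × Ordinal // x ∈ q.carrier ∧ x.1 < μ} := mk_union_le _ _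
      _ < lift.{1} μ.card :=
          add_lt_of_lt (aleph0_le_lift.mpr hμ.1.aleph0_lt.le) (p.small μ hμκ hμ) (q.small μ hμκ hμ)

section Cone

variable {p : FastFn κ} (hp : p.carrier = {(γ, δ)})
include hp

theorem mem_of_le {q : FastFn κ} (hq : q ≤ p) : (γ, δ) ∈ q.carrier :=
  hq (hp ▸ rfl)

theorem fst_lt_or_mem_or_le (hleast : ∀ μ, IsInaccOrd μ → max γ δ < μ → lam ≤ μ)
    {q : FastFn κ} (hq : q ≤ p) {x : Ordinal × Ordinal} (hx : x ∈ q.carrier) :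
    x.1 < γ ∨ x ∈ p.carrier ∨ lam ≤ x.1 := by
  have hγδ := mem_of_le hp hq
  rcases lt_trichotomy x.1 γ with h | h | h
  · exact Or.inl h
  · refine Or.inr (Or.inl (hp ▸ Prod.ext h (q.isFunc (a := γ) ?_ hγδ)))
    exact h ▸ hx
  · exact Or.inr (Or.inr (hleast x.1 (q.dom_inacc hx) (max_lt h (q.image_lt hx hγδ h))))

theorem carrier_eq_of_le (hleast : ∀ μ, IsInaccOrd μ → max γ δ < μ → lam ≤ μ)
    {q : FastFn κ} (hq : q ≤ p) :
    q.carrier = {x | x ∈ q.carrier ∧ x.1 < γ} ∪ p.carrier ∪ {x | x ∈ q.carrier ∧ lam ≤ x.1} := by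
  refine Set.Subset.antisymm (fun x hx => ?_) ?_
  · rcases fst_lt_or_mem_or_le hp hleast hq hx with h | h | h
    exacts [Or.inl (Or.inl ⟨hx, h⟩), Or.inl (Or.inr h), Or.inr ⟨hx, h⟩]
  · exact Set.union_subset (Set.union_subset (fun _ hx => hx.1) hq) fun _ hx => hx.1

theorem carrier_subset_iff_of_le (hleast : ∀ μ, IsInaccOrd μ → max γ δ < μ → lam ≤ μ)
    {q q' : FastFn κ} (hq : q ≤ p) (hq' : q' ≤ p) :
    q'.carrier ⊆ q.carrier ↔
      {x | x ∈ q'.carrier ∧ x.1 < γ} ⊆ {x | x ∈ q.carrier ∧ x.1 < γ} ∧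
        {x | x ∈ q'.carrier ∧ lam ≤ x.1} ⊆ {x | x ∈ q.carrier ∧ lam ≤ x.1} := by
  refine ⟨fun h => ⟨fun x hx => ⟨h hx.1, hx.2⟩, fun x hx => ⟨h hx.1, hx.2⟩⟩, fun h => ?_⟩
  rw [carrier_eq_of_le hp hleast hq']
  exact Set.union_subset (Set.union_subset (fun x hx => (h.1 hx).1) hq) fun x hx => (h.2 hx).1

variable (hγ : IsInaccOrd γ) (hγκ : γ ≤ κ) (hγlam : γ < lam) (hδlam : δ < lam)

def glue (r : FastFn γ) (s : FastFn κ) (hs : ∀ x ∈ s.carrier, lam ≤ x.1) : FastFn κ :=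
  ((r.liftLE hγ hγκ).append p fun x hx y hy => by
      obtain rfl : y = (γ, δ) := by rwa [hp] at hy
      exact r.mem_lt hx).append s fun x hx y hy => by
    have hlt : x.1 < lam ∧ x.2 < lam := by
      rcases hx with hx | hx
      · exact ⟨(r.mem_lt hx).1.trans hγlam, (r.mem_lt hx).2.trans hγlam⟩
      · obtain rfl : x = (γ, δ) := by rwa [hp] at hx
        exact ⟨hγlam, hδlam⟩
    exact ⟨hlt.1.trans_le (hs y hy), hlt.2.trans_le (hs y hy)⟩

theorem glue_le (r : FastFn γ) (s : FastFn κ) (hs : ∀ x ∈ s.carrier, lam ≤ x.1) :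
    glue hp hγ hγκ hγlam hδlam r s hs ≤ p :=
  Set.subset_union_of_subset_left Set.subset_union_right _

theorem restrictBelow_glue (r : FastFn γ) (s : FastFn κ) (hs : ∀ x ∈ s.carrier, lam ≤ x.1)
    (h : (γ, δ) ∈ (glue hp hγ hγκ hγlam hδlam r s hs).carrier) :
    (glue hp hγ hγκ hγlam hδlam r s hs).restrictBelow h = r := by
  refine ext (Set.Subset.antisymm ?_ fun x hx => ⟨Or.inl (Or.inl hx), (r.mem_lt hx).1⟩)
  rintro x ⟨(hx | hx) | hx, hxγ⟩
  · exact hx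
  · rw [hp, Set.mem_singleton_iff] at hx
    subst hx
    exact absurd hxγ (lt_irrefl γ)
  · exact absurd (hs x hx) (hxγ.trans hγlam).not_ge

theorem restrictFrom_glue (r : FastFn γ) (s : FastFn κ) (hs : ∀ x ∈ s.carrier, lam ≤ x.1) :
    (glue hp hγ hγκ hγlam hδlam r s hs).restrictFrom lam = s := by
  refine ext (Set.Subset.antisymm ?_ fun x hx => ⟨Or.inr hx, hs x hx⟩)
  rintro x ⟨(hx | hx) | hx, hlamx⟩
  · exact absurd hlamx ((r.mem_lt hx).1.trans hγlam).not_ge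
  · rw [hp, Set.mem_singleton_iff] at hx
    subst hx
    exact absurd hlamx hγlam.not_ge
  · exact hx

def coneOrderIso (hleast : ∀ μ, IsInaccOrd μ → max γ δ < μ → lam ≤ μ) :
    {q : FastFn κ // q ≤ p} ≃o FastFn γ × {q : FastFn κ // ∀ x ∈ q.carrier, lam ≤ x.1} where
  toFun q := (q.1.restrictBelow (mem_of_le hp q.2), ⟨q.1.restrictFrom lam, fun _ hx => hx.2⟩)
  invFun rs := ⟨glue hp hγ hγκ hγlam hδlam rs.1 rs.2.1 rs.2.2, glue_le hp hγ hγκ hγlam hδlam _ _ _⟩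
  left_inv q := Subtype.ext (ext (carrier_eq_of_le hp hleast q.2).symm)
  right_inv rs := Prod.ext (restrictBelow_glue hp hγ hγκ hγlam hδlam _ _ rs.2.2
    (mem_of_le hp (glue_le hp hγ hγκ hγlam hδlam _ _ _)))
    (Subtype.ext (restrictFrom_glue hp hγ hγκ hγlam hδlam _ _ rs.2.2))
  map_rel_iff' {q q'} := (carrier_subset_iff_of_le hp hleast q.2 q'.2).symm

end Cone

end FastFn

theorem fastFn_cone_factorization_general
    (κ γ δ lam : Ordinal)
    (hγ : IsInaccOrd γ)
    (hγκ : γ < κ)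
    (hlam_gt : max γ δ < lam)
    (hlam_least : ∀ μ : Ordinal, IsInaccOrd μ → max γ δ < μ → lam ≤ μ)
    (p : FastFn κ) (hp : p.carrier = {(γ, δ)}) :
    ∃ e : {q : FastFn κ // q ≤ p} ≃o
        (FastFn γ × {q : FastFn κ // ∀ x ∈ q.carrier, lam ≤ x.1}),
      ∀ q : {q : FastFn κ // q ≤ p},
        (e q).1.carrier = {x | x ∈ q.1.carrier ∧ x.1 < γ} ∧
        (e q).2.1.carrier = {x | x ∈ q.1.carrier ∧ lam ≤ x.1} :=
  have ⟨hγlam, hδlam⟩ := max_lt_iff.mp hlam_gt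
  ⟨FastFn.coneOrderIso hp hγ hγκ.le hγlam hδlam hlam_least, fun _ => ⟨rfl, rfl⟩⟩

theorem fastFn_cone_factorization
    (κ γ δ lam : Ordinal)
    (hκ : IsInaccOrd κ) (hγ : IsInaccOrd γ)
    (hγκ : γ < κ) (hδκ : δ < κ)
    (hlam_inacc : IsInaccOrd lam) (hlam_gt : max γ δ < lam) (hlam_le : lam ≤ κ)
    (hlam_least : ∀ μ : Ordinal, IsInaccOrd μ → max γ δ < μ → lam ≤ μ)
    (p : FastFn κ) (hp : p.carrier = {(γ, δ)}) :
    ∃ e : {q : FastFn κ // q ≤ p} ≃o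
        (FastFn γ × {q : FastFn κ // ∀ x ∈ q.carrier, lam ≤ x.1}),
      ∀ q : {q : FastFn κ // q ≤ p},
        (e q).1.carrier = {x | x ∈ q.1.carrier ∧ x.1 < γ} ∧
        (e q).2.1.carrier = {x | x ∈ q.1.carrier ∧ lam ≤ x.1} :=
  fastFn_cone_factorization_general κ γ δ lam hγ hγκ hlam_gt hlam_least p hp
end

section
/- For an inaccessible cardinal κ and ordinal λ < κ, the tail fast function poset F_{[λ,κ)} = { p ∈ F_κ : dom(p) ⊆ [λ,κ) } is <δ-closed, where δ is the least inaccessible cardinal ≥ λ; in particular, any descending sequence of conditions of length < δ has its union as a lower bound. -/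
/-!
A directed union of conditions inherits every clause of `FastFn` except possibly smallness
below an inaccessible `γ`. If the union has a point `x` of its domain below `γ`, then in the
tail poset `δ ≤ x.1 < γ`, so a family indexed by an ordinal `o < δ` has fewer than `γ.card`
members, and by regularity of `γ.card` a union of fewer than `γ.card` sets of size `< γ.card`
is still of size `< γ.card`. If there is no such point, the restriction below `γ` is empty.
-/

open Cardinal

theorem IsInaccOrd.card_lt_card_of_lt {γ o : Ordinal} (hγ : IsInaccOrd γ) (h : o < γ) :
    o.card < γ.card := by
  rwa [← Cardinal.lt_ord, hγ.2]

namespace FastFn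

variable {κ : Ordinal} {ι : Type 1}

def ofDirected (p : ι → FastFn κ) (hp : Directed (· ⊆ ·) fun i => (p i).carrier)
    (hsmall : ∀ γ : Ordinal, γ ≤ κ → IsInaccOrd γ →
      #{x : Ordinal × Ordinal // x ∈ ⋃ i, (p i).carrier ∧ x.1 < γ} < lift.{1, 0} γ.card) :
    FastFn κ where
  carrier := ⋃ i, (p i).carrier
  isFunc _ _ _ hb hc := by
    obtain ⟨i, hi⟩ := Set.mem_iUnion.1 hb
    obtain ⟨j, hj⟩ := Set.mem_iUnion.1 hc
    obtain ⟨k, hik, hjk⟩ := hp i j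
    exact (p k).isFunc (hik hi) (hjk hj)
  mem_lt _ hx := by
    obtain ⟨i, hi⟩ := Set.mem_iUnion.1 hx
    exact (p i).mem_lt hi
  dom_inacc _ _ hab := by
    obtain ⟨i, hi⟩ := Set.mem_iUnion.1 hab
    exact (p i).dom_inacc hi
  image_lt _ _ _ _ hab hcd hca := by
    obtain ⟨i, hi⟩ := Set.mem_iUnion.1 hab
    obtain ⟨j, hj⟩ := Set.mem_iUnion.1 hcd
    obtain ⟨k, hik, hjk⟩ := hp i j
    exact (p k).image_lt (hik hi) (hjk hj) hca
  small := hsmall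

theorem mk_iUnion_restrict_lt (p : ι → FastFn κ) {γ : Ordinal} (hγκ : γ ≤ κ) (hγ : IsInaccOrd γ)
    (hι : (∃ x ∈ ⋃ i, (p i).carrier, x.1 < γ) → #ι < lift.{1, 0} γ.card) :
    #{x : Ordinal × Ordinal // x ∈ ⋃ i, (p i).carrier ∧ x.1 < γ} < lift.{1, 0} γ.card := by
  by_cases hne : ∃ x ∈ ⋃ i, (p i).carrier, x.1 < γ
  · have hset : {x : Ordinal × Ordinal | x ∈ ⋃ i, (p i).carrier ∧ x.1 < γ} =
        ⋃ i, {x | x ∈ (p i).carrier ∧ x.1 < γ} := by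
      ext x
      simp only [Set.mem_ofPred_eq, Set.mem_iUnion, exists_and_right]
    change #{x : Ordinal × Ordinal | x ∈ ⋃ i, (p i).carrier ∧ x.1 < γ} < _
    rw [hset, card_iUnion_lt_iff_forall_of_isRegular hγ.1.isRegular.lift (hι hne)]
    exact fun i => (p i).small γ hγκ hγ
  · have hempty : IsEmpty {x : Ordinal × Ordinal // x ∈ ⋃ i, (p i).carrier ∧ x.1 < γ} :=
      ⟨fun x => hne ⟨x.1, x.2⟩⟩
    rw [mk_eq_zero]
    have := lift_lt.{0, 1}.2 (aleph0_pos.trans hγ.1.1)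
    rwa [lift_zero] at this

end FastFn

theorem fastFn_tail_closed_general
    (κ : Cardinal)
    (lam δ : Ordinal)
    (hδ_least : ∀ μ : Ordinal, IsInaccOrd μ → lam ≤ μ → δ ≤ μ) :
    ∀ o : Ordinal, o < δ →
      ∀ f : Set.Iio o → {q : FastFn κ.ord // ∀ x ∈ q.carrier, lam ≤ x.1},
        (∀ a b : Set.Iio o, a ≤ b → (f a).1.carrier ⊆ (f b).1.carrier) →
        ∃ l : {q : FastFn κ.ord // ∀ x ∈ q.carrier, lam ≤ x.1},
          l.1.carrier = (⋃ a, (f a).1.carrier) ∧ ∀ a, l ≤ f a := by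
  intro o ho f hmono
  have hsmall (γ : Ordinal) (hγκ : γ ≤ κ.ord) (hγ : IsInaccOrd γ) :=
    FastFn.mk_iUnion_restrict_lt (fun a => (f a).1) hγκ hγ fun ⟨x, hx, hxγ⟩ => by
      obtain ⟨i, hi⟩ := Set.mem_iUnion.1 hx
      have hδx : δ ≤ x.1 := hδ_least x.1 ((f i).1.dom_inacc hi) ((f i).2 x hi)
      rw [Cardinal.mk_Iio_ordinal, lift_lt]
      exact hγ.card_lt_card_of_lt (ho.trans_le (hδx.trans hxγ.le))
  refine ⟨⟨FastFn.ofDirected _ (Monotone.directed_le hmono) hsmall, fun x hx => ?_⟩, rfl,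
    fun a => Set.subset_iUnion (fun b => (f b).1.carrier) a⟩
  obtain ⟨i, hi⟩ := Set.mem_iUnion.1 hx
  exact (f i).2 x hi

theorem fastFn_tail_closed
    (κ : Cardinal) (hκ : κ.IsInaccessible)
    (lam δ : Ordinal) (hlam : lam < κ.ord)
    (hδ_inacc : IsInaccOrd δ) (hδ_ge : lam ≤ δ)
    (hδ_least : ∀ μ : Ordinal, IsInaccOrd μ → lam ≤ μ → δ ≤ μ) :
    ∀ o : Ordinal, o < δ →
      ∀ f : Set.Iio o → {q : FastFn κ.ord // ∀ x ∈ q.carrier, lam ≤ x.1},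
        (∀ a b : Set.Iio o, a ≤ b → (f a).1.carrier ⊆ (f b).1.carrier) →
        ∃ l : {q : FastFn κ.ord // ∀ x ∈ q.carrier, lam ≤ x.1},
          l.1.carrier = (⋃ a, (f a).1.carrier) ∧ ∀ a, l ≤ f a :=
  fastFn_tail_closed_general κ lam δ hδ_least
end
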